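/- arXiv:1109.6547 — 13 statements merged into one kernel-verified Lean document; each statement's English description precedes it below -/
import Mathlib

section
/- Let p, q be positive reals and α, β, ν, γ real numbers with p^ν ≠ q^α. If the sequence f : ℕ → ℝ satisfies f(0) = 0 and the recurrence f(n+1) − p^ν · f(n) = (1 + 2γ·(−1)^n) · q^(αn + β) for all n ∈ ℕ, then for all n ∈ ℕ, f(n) = q^β · ( (p^(nν) − q^(nα))/(p^ν − q^α) + 2γ · (p^(nν) − (−1)^n · q^(nα))/(p^ν + q^α) ). -/
open Real

theorem stmt_0 (p q α β ν γ : ℝ) (hp : 0 < p) (hq : 0 < q)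
    (hne : p ^ ν ≠ q ^ α) (f : ℕ → ℝ) (hf0 : f 0 = 0)
    (hrec : ∀ n : ℕ, f (n + 1) - p ^ ν * f n
      = (1 + 2 * γ * (-1 : ℝ) ^ n) * q ^ (α * n + β)) :
    ∀ n : ℕ, f n = q ^ β *
      ((p ^ ((n : ℝ) * ν) - q ^ ((n : ℝ) * α)) / (p ^ ν - q ^ α)
        + 2 * γ * (p ^ ((n : ℝ) * ν) - (-1 : ℝ) ^ n * q ^ ((n : ℝ) * α))
            / (p ^ ν + q ^ α)) := by
  have hP : (0:ℝ) < p ^ ν := Real.rpow_pos_of_pos hp ν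
  have hQ : (0:ℝ) < q ^ α := Real.rpow_pos_of_pos hq α
  have hsub : p ^ ν - q ^ α ≠ 0 := sub_ne_zero.mpr hne
  have hadd : p ^ ν + q ^ α ≠ 0 := by positivity
  have hpn : ∀ n : ℕ, p ^ ((n : ℝ) * ν) = (p ^ ν) ^ n := by
    intro n
    rw [mul_comm, Real.rpow_mul hp.le, Real.rpow_natCast]
  have hqn : ∀ n : ℕ, q ^ ((n : ℝ) * α) = (q ^ α) ^ n := by
    intro n
    rw [mul_comm, Real.rpow_mul hq.le, Real.rpow_natCast]
  intro n
  induction n with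
  | zero => simp [hf0]
  | succ n ih =>
    have hr := hrec n
    have hq' : q ^ (α * n + β) = (q ^ α) ^ n * q ^ β := by
      rw [Real.rpow_add hq, mul_comm α (n:ℝ), hqn n]
    have : f (n+1) = p ^ ν * f n + (1 + 2 * γ * (-1 : ℝ) ^ n) * q ^ (α * n + β) := by
      linarith [hrec n]
    rw [this, ih, hq', hpn, hqn, hpn, hqn]
    field_simp
    ring
end

section
/- Let p, q be positive reals and α, β, ν, γ real numbers with p^ν = q^α. If the sequence f : ℕ → ℝ satisfies f(0) = 0 and the recurrence f(n+1) − p^ν · f(n) = (1 + 2γ·(−1)^n) · q^(αn + β) for all n ∈ ℕ, then for all n ∈ ℕ, f(n) = ( n + 2γ · (1 − (−1)^n)/2 ) · q^((n−1)α + β). -/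
open Real

theorem stmt_1 (p q α β ν γ : ℝ) (hp : 0 < p) (hq : 0 < q)
    (heq : p ^ ν = q ^ α) (f : ℕ → ℝ) (hf0 : f 0 = 0)
    (hrec : ∀ n : ℕ, f (n + 1) - p ^ ν * f n
      = (1 + 2 * γ * (-1 : ℝ) ^ n) * q ^ (α * n + β)) :
    ∀ n : ℕ, f n = ((n : ℝ) + 2 * γ * (1 - (-1 : ℝ) ^ n) / 2)
      * q ^ (((n : ℝ) - 1) * α + β) := by
  intro n
  induction n with
  | zero => simp [hf0]
  | succ n ih =>
    have h := hrec n
    rw [heq] at h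
    have hfn : f (n + 1) = q ^ α * f n + (1 + 2 * γ * (-1 : ℝ) ^ n) * q ^ (α * n + β) := by
      linarith
    rw [hfn, ih]
    have e1 : q ^ α * q ^ (((n : ℝ) - 1) * α + β) = q ^ (α * n + β) := by
      rw [← rpow_add hq]; congr 1; ring
    have e2 : ((↑(n + 1) : ℝ) - 1) * α + β = α * n + β := by push_cast; ring
    rw [e2, ← e1]
    push_cast [pow_succ]
    ring
end

section
/- Let p, q be positive reals and α, β, ν, γ real numbers with ν·ln p > α·ln q. If −2γ < 1, then for every integer n ≥ 1 the quantity f(n) = q^β · ( (p^(nν) − q^(nα))/(p^ν − q^α) + 2γ · (p^(nν) − (−1)^n · q^(nα))/(p^ν + q^α) ) is strictly positive. -/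
open Real

theorem stmt_3 (p q α β ν γ : ℝ) (hp : 0 < p) (hq : 0 < q)
    (hgt : ν * Real.log p > α * Real.log q) (hγ : -(2 * γ) < 1) :
    ∀ n : ℕ, 1 ≤ n →
      0 < q ^ β *
        ((p ^ ((n : ℝ) * ν) - q ^ ((n : ℝ) * α)) / (p ^ ν - q ^ α)
          + 2 * γ * (p ^ ((n : ℝ) * ν) - (-1 : ℝ) ^ n * q ^ ((n : ℝ) * α))
              / (p ^ ν + q ^ α)) := by
  have hQP : q ^ α < p ^ ν := by
    rw [Real.rpow_def_of_pos hp, Real.rpow_def_of_pos hq]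
    exact Real.exp_lt_exp.mpr (by nlinarith [hgt])
  have hP0 : (0:ℝ) < p ^ ν := Real.rpow_pos_of_pos hp ν
  have hQ0 : (0:ℝ) < q ^ α := Real.rpow_pos_of_pos hq α
  intro n hn
  have hrw1 : p ^ ((n : ℝ) * ν) = (p ^ ν) ^ n := by
    rw [mul_comm, Real.rpow_mul hp.le, Real.rpow_natCast]
  have hrw2 : q ^ ((n : ℝ) * α) = (q ^ α) ^ n := by
    rw [mul_comm, Real.rpow_mul hq.le, Real.rpow_natCast]
  rw [hrw1, hrw2]
  set P := p ^ ν with hPdef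
  set Q := q ^ α with hQdef
  have hd1 : (0:ℝ) < P - Q := sub_pos.mpr hQP
  have hd2 : (0:ℝ) < P + Q := by positivity
  have hpow : Q ^ n < P ^ n := pow_lt_pow_left₀ hQP hQ0.le (by omega)
  have hQn : (0:ℝ) < Q ^ n := pow_pos hQ0 n
  have hA : 0 < (P ^ n - Q ^ n) / (P - Q) := div_pos (sub_pos.mpr hpow) hd1
  have hB0 : 0 ≤ (P ^ n - (-1:ℝ) ^ n * Q ^ n) / (P + Q) := by
    apply div_nonneg _ hd2.le
    rcases Nat.even_or_odd n with h | h
    · rw [h.neg_one_pow]; nlinarith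
    · rw [h.neg_one_pow]; nlinarith
  have hBA : (P ^ n - (-1:ℝ) ^ n * Q ^ n) / (P + Q) ≤ (P ^ n - Q ^ n) / (P - Q) := by
    rw [div_le_div_iff₀ hd2 hd1]
    rcases Nat.even_or_odd n with h | h
    · rw [h.neg_one_pow]; nlinarith
    · rw [h.neg_one_pow]
      obtain ⟨m, rfl⟩ := h
      have h2 : Q ^ (2*m) ≤ P ^ (2*m) := pow_le_pow_left₀ hQ0.le hQP.le _
      have h3 : Q * Q ^ (2*m) ≤ P * P ^ (2*m) :=
        mul_le_mul hQP.le h2 (pow_pos hQ0 _).le hP0.le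
      have h4 : 0 ≤ P * Q * (P ^ (2*m) - Q ^ (2*m)) :=
        mul_nonneg (mul_pos hP0 hQ0).le (sub_nonneg.mpr h2)
      have e1 : P ^ (2*m+1) = P * P ^ (2*m) := by ring
      have e2 : Q ^ (2*m+1) = Q * Q ^ (2*m) := by ring
      nlinarith
  apply mul_pos (Real.rpow_pos_of_pos hq β)
  rw [mul_div_assoc]
  set A := (P ^ n - Q ^ n) / (P - Q) with hAdef
  set B := (P ^ n - (-1:ℝ) ^ n * Q ^ n) / (P + Q) with hBdef
  rcases le_or_gt 0 γ with h | h
  · nlinarith [mul_nonneg h hB0]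
  · have h5 : 2 * γ * A ≤ 2 * γ * B := mul_le_mul_of_nonpos_left hBA (by linarith)
    nlinarith [mul_pos (show (0:ℝ) < 1 + 2*γ by linarith) hA]
end

section
/- Let p, q be positive reals and α, β, ν, γ real numbers with ν·ln p < α·ln q. If −1 < 2γ < −(p^ν + q^α)/(p^ν − q^α), then for every integer n ≥ 1 the quantity f(n) = q^β · ( (p^(nν) − q^(nα))/(p^ν − q^α) + 2γ · (p^(nν) − (−1)^n · q^(nα))/(p^ν + q^α) ) is strictly positive. -/
open Real

lemma aux_pos (P Q t : ℝ) (hP : 0 < P) (hPQ : P < Q) (ht1 : -1 < t)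
    (ht2 : t < (P + Q) / (Q - P)) (n : ℕ) (hn : 1 ≤ n) :
    0 < (P ^ n - Q ^ n) / (P - Q) + t * (P ^ n - (-1 : ℝ) ^ n * Q ^ n) / (P + Q) := by
  have hQ : 0 < Q := hP.trans hPQ
  have hd : 0 < Q - P := by linarith
  have hs : 0 < P + Q := by linarith
  have hQn : P ^ n < Q ^ n := pow_lt_pow_left₀ hPQ hP.le (by omega)
  have key : (P ^ n - Q ^ n) / (P - Q) + t * (P ^ n - (-1 : ℝ) ^ n * Q ^ n) / (P + Q)
      = ((Q ^ n - P ^ n) * (P + Q) + t * (Q - P) * (P ^ n - (-1 : ℝ) ^ n * Q ^ n))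
        / ((Q - P) * (P + Q)) := by
    have h1 : P - Q ≠ 0 := by linarith
    have h2 : P + Q ≠ 0 := by linarith
    field_simp
    ring
  rw [key]
  apply div_pos _ (mul_pos hd hs)
  rcases Nat.even_or_odd n with he | ho
  · rw [he.neg_one_pow]
    have htd : t * (Q - P) < P + Q := (lt_div_iff₀ hd).mp ht2
    nlinarith [mul_pos hd hs, hQn]
  · rw [ho.neg_one_pow]
    obtain ⟨m, hm⟩ : ∃ m, n = m + 1 := ⟨n - 1, by omega⟩
    subst hm
    have hm1 : P ^ m ≤ Q ^ m := pow_le_pow_left₀ hP.le hPQ.le m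
    have hPn : 0 < P ^ (m + 1) := pow_pos hP _
    have hQn' : 0 < Q ^ (m + 1) := pow_pos hQ _
    have e1 : P ^ (m + 1) = P * P ^ m := by ring
    have e2 : Q ^ (m + 1) = Q * Q ^ m := by ring
    nlinarith [mul_pos hP hQ, mul_nonneg (mul_pos hP hQ).le (sub_nonneg.mpr hm1),
      mul_pos hd (add_pos hPn hQn')]

theorem stmt_4 (p q α β ν γ : ℝ) (hp : 0 < p) (hq : 0 < q)
    (hlt : ν * Real.log p < α * Real.log q)
    (hγ₁ : -1 < 2 * γ) (hγ₂ : 2 * γ < -((p ^ ν + q ^ α) / (p ^ ν - q ^ α))) :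
    ∀ n : ℕ, 1 ≤ n →
      0 < q ^ β *
        ((p ^ ((n : ℝ) * ν) - q ^ ((n : ℝ) * α)) / (p ^ ν - q ^ α)
          + 2 * γ * (p ^ ((n : ℝ) * ν) - (-1 : ℝ) ^ n * q ^ ((n : ℝ) * α))
              / (p ^ ν + q ^ α)) := by
  intro n hn
  set P := p ^ ν with hPdef
  set Q := q ^ α with hQdef
  have hP : 0 < P := rpow_pos_of_pos hp ν
  have hQ : 0 < Q := rpow_pos_of_pos hq α
  have hPQ : P < Q := by
    rw [hPdef, hQdef, rpow_def_of_pos hp, rpow_def_of_pos hq]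
    exact exp_lt_exp.mpr (by rw [mul_comm, mul_comm (Real.log q)]; exact hlt)
  have hePn : p ^ ((n : ℝ) * ν) = P ^ n := by
    rw [mul_comm, rpow_mul hp.le, rpow_natCast]
  have heQn : q ^ ((n : ℝ) * α) = Q ^ n := by
    rw [mul_comm, rpow_mul hq.le, rpow_natCast]
  rw [hePn, heQn]
  have ht2 : 2 * γ < (P + Q) / (Q - P) := by
    have : -((P + Q) / (P - Q)) = (P + Q) / (Q - P) := by
      rw [show Q - P = -(P - Q) by ring, div_neg]
    linarith [this ▸ hγ₂]
  have := aux_pos P Q (2 * γ) hP hPQ hγ₁ ht2 n hn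
  have hqb : 0 < q ^ β := rpow_pos_of_pos hq β
  have heq : (P ^ n - Q ^ n) / (P - Q) + 2 * γ * (P ^ n - (-1 : ℝ) ^ n * Q ^ n) / (P + Q)
      = (P ^ n - Q ^ n) / (P - Q) + (2 * γ) * (P ^ n - (-1 : ℝ) ^ n * Q ^ n) / (P + Q) := by ring
  positivity
end

section
/- Let p, q be positive reals and α, ν real numbers with (ν·ln p − α·ln q)·(p^ν − q^α) > 0. Define g : ℝ → ℝ by g(x) = ((p^ν + q^α)/(p^ν − q^α)) · (p^(xν) − q^(xα))/(p^(xν) + q^(xα)). Then g is strictly increasing on ℝ; in particular, for every integer n > 1 one has g(n) > g(1) = 1. -/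
/-!
With `a = p ^ ν`, `b = q ^ α` one has `p ^ (x * ν) = a ^ x`, so
`g x = (a + b) / (a - b) * (a ^ x - b ^ x) / (a ^ x + b ^ x)`, and `a ≠ b`.
This expression is symmetric in `a` and `b`, so we may take `b < a`: then the prefactor is positive
and `(a ^ x - b ^ x) / (a ^ x + b ^ x) = 1 - 2 / ((a / b) ^ x + 1)` increases with `x`.
-/

open Real

theorem strictMono_rpow_sub_div_rpow_add {a b : ℝ} (hb : 0 < b) (hba : b < a) :
    StrictMono fun x : ℝ => (a ^ x - b ^ x) / (a ^ x + b ^ x) := by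
  have ha : 0 < a := hb.trans hba
  intro x y hxy
  have hratio : (a / b) ^ x < (a / b) ^ y :=
    rpow_lt_rpow_of_exponent_lt ((one_lt_div hb).mpr hba) hxy
  rw [div_rpow ha.le hb.le, div_rpow ha.le hb.le,
    div_lt_div_iff₀ (rpow_pos_of_pos hb x) (rpow_pos_of_pos hb y)] at hratio
  have hax := rpow_pos_of_pos ha x
  have hay := rpow_pos_of_pos ha y
  have hbx := rpow_pos_of_pos hb x
  have hby := rpow_pos_of_pos hb y
  dsimp only
  rw [div_lt_div_iff₀ (by positivity) (by positivity)]
  linarith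

theorem strictMono_normalized_rpow_sub_div_rpow_add {a b : ℝ} (ha : 0 < a) (hb : 0 < b)
    (hab : a ≠ b) :
    StrictMono fun x : ℝ => (a + b) / (a - b) * ((a ^ x - b ^ x) / (a ^ x + b ^ x)) := by
  wlog hba : b < a generalizing a b
  · convert this hb ha hab.symm (hab.lt_or_gt.resolve_right hba) using 2 with x
    rw [← neg_sub b a, ← neg_sub (b ^ x) (a ^ x), add_comm a b, add_comm (a ^ x),
      div_neg, neg_div, neg_mul_neg]
  exact (strictMono_rpow_sub_div_rpow_add hb hba).const_mul
    (div_pos (by linarith) (sub_pos.mpr hba))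

theorem stmt_5 (p q α ν : ℝ) (hp : 0 < p) (hq : 0 < q)
    (h : (ν * Real.log p - α * Real.log q) * (p ^ ν - q ^ α) > 0)
    (g : ℝ → ℝ)
    (hg : ∀ x : ℝ, g x = ((p ^ ν + q ^ α) / (p ^ ν - q ^ α))
      * ((p ^ (x * ν) - q ^ (x * α)) / (p ^ (x * ν) + q ^ (x * α)))) :
    StrictMono g ∧ g 1 = 1 ∧ ∀ n : ℤ, 1 < n → g 1 < g n := by
  have hne : p ^ ν ≠ q ^ α := fun heq => by simp [heq] at h
  have hg' : g = fun x : ℝ => (p ^ ν + q ^ α) / (p ^ ν - q ^ α) *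
      (((p ^ ν) ^ x - (q ^ α) ^ x) / ((p ^ ν) ^ x + (q ^ α) ^ x)) := by
    ext x
    rw [hg, ← rpow_mul hp.le, ← rpow_mul hq.le, mul_comm ν, mul_comm α]
  have hmono : StrictMono g := hg' ▸
    strictMono_normalized_rpow_sub_div_rpow_add (rpow_pos_of_pos hp ν) (rpow_pos_of_pos hq α) hne
  have hg1 : g 1 = 1 := by
    rw [hg, one_mul, one_mul]
    field_simp [sub_ne_zero.mpr hne]
  exact ⟨hmono, hg1, fun n hn => hmono (by exact_mod_cast hn)⟩
end

section
/- Let p, q be positive reals, α, ν real numbers with p^ν ≠ q^α, and c a real number. Define the bracket sequence b : ℕ → ℝ by b(n) = (p^(nν) − q^(nα))/(p^ν − q^α) + 2c · (q^(nα) − (−1)^n · p^(nν))/(p^ν + q^α). Then b(0) = 0, b(1) = 1 + 2c, and for all n ∈ ℕ, b(n+1) = p^(nν) · (1 + 2(−1)^n · c) + q^α · b(n). -/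
open Real

theorem stmt_7 (p q α ν c : ℝ) (hp : 0 < p) (hq : 0 < q)
    (hne : p ^ ν ≠ q ^ α) (b : ℕ → ℝ)
    (hb : ∀ n : ℕ, b n = (p ^ ((n : ℝ) * ν) - q ^ ((n : ℝ) * α)) / (p ^ ν - q ^ α)
      + 2 * c * (q ^ ((n : ℝ) * α) - (-1 : ℝ) ^ n * p ^ ((n : ℝ) * ν))
          / (p ^ ν + q ^ α)) :
    b 0 = 0 ∧ b 1 = 1 + 2 * c ∧
      ∀ n : ℕ, b (n + 1) = p ^ ((n : ℝ) * ν) * (1 + 2 * (-1 : ℝ) ^ n * c)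
        + q ^ α * b n := by
  have hP : ∀ n : ℕ, p ^ ((n : ℝ) * ν) = (p ^ ν) ^ n := by
    intro n
    rw [mul_comm, Real.rpow_mul hp.le, Real.rpow_natCast]
  have hQ : ∀ n : ℕ, q ^ ((n : ℝ) * α) = (q ^ α) ^ n := by
    intro n
    rw [mul_comm, Real.rpow_mul hq.le, Real.rpow_natCast]
  have hsub : p ^ ν - q ^ α ≠ 0 := sub_ne_zero.mpr hne
  have hadd : p ^ ν + q ^ α ≠ 0 :=
    (add_pos (Real.rpow_pos_of_pos hp ν) (Real.rpow_pos_of_pos hq α)).ne'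
  refine ⟨?_, ?_, ?_⟩
  · rw [hb]; simp
  · rw [hb]; push_cast; simp only [hP, hQ, pow_one]
    field_simp
    ring
  · intro n
    rw [hb, hb]
    push_cast
    simp only [add_mul, one_mul, Real.rpow_add hp, Real.rpow_add hq, hP, hQ, pow_succ]
    field_simp
    ring
end

section
/- Let p, q be positive reals and α, β, ν real numbers with p^ν ≠ q^α, and let ν₀, B, λ₀ be real numbers. If the sequence λ : ℕ → ℝ satisfies λ(0) = λ₀ and the recurrence λ(n+1) = p^ν · λ(n) + q^(αν₀ + β) · (1 + (−1)^n · B) · q^(αn) for all n ∈ ℕ, then for all n ∈ ℕ, λ(n) = p^(nν) · λ₀ + q^(αν₀ + β) · ( (p^(nν) − q^(nα))/(p^ν − q^α) + B · (p^(nν) − (−1)^n · q^(nα))/(p^ν + q^α) ). -/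
open Real

/-- The forcing term is the sum of the geometric sequences `C b ^ n` and `C B (-b) ^ n`, each
contributing a particular solution of the form `(a ^ n - c ^ n) / (a - c)`. -/
theorem linearRecurrence_alternating_geometric_closedForm {K : Type*} [Field K] (a b C B l₀ : K)
    (hsub : a - b ≠ 0) (hadd : a + b ≠ 0) (l : ℕ → K) (hl0 : l 0 = l₀)
    (hrec : ∀ n : ℕ, l (n + 1) = a * l n + C * (1 + (-1) ^ n * B) * b ^ n) (n : ℕ) :
    l n = a ^ n * l₀ + C * ((a ^ n - b ^ n) / (a - b)
      + B * (a ^ n - (-1) ^ n * b ^ n) / (a + b)) := by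
  induction n with
  | zero => simp [hl0]
  | succ n ih =>
    rw [hrec n, ih]
    field_simp
    ring

theorem rpow_natCast_mul_eq_pow {x : ℝ} (hx : 0 ≤ x) (n : ℕ) (y : ℝ) :
    x ^ ((n : ℝ) * y) = (x ^ y) ^ n := by
  rw [mul_comm, rpow_mul_natCast hx]

theorem stmt_11 (p q α β ν ν₀ B Λ₀ : ℝ) (hp : 0 < p) (hq : 0 < q)
    (hne : p ^ ν ≠ q ^ α) (l : ℕ → ℝ) (hl0 : l 0 = Λ₀)
    (hrec : ∀ n : ℕ, l (n + 1) = p ^ ν * l n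
      + q ^ (α * ν₀ + β) * (1 + (-1 : ℝ) ^ n * B) * q ^ (α * n)) :
    ∀ n : ℕ, l n = p ^ ((n : ℝ) * ν) * Λ₀
      + q ^ (α * ν₀ + β) *
        ((p ^ ((n : ℝ) * ν) - q ^ ((n : ℝ) * α)) / (p ^ ν - q ^ α)
          + B * (p ^ ((n : ℝ) * ν) - (-1 : ℝ) ^ n * q ^ ((n : ℝ) * α))
              / (p ^ ν + q ^ α)) := by
  intro n
  rw [rpow_natCast_mul_eq_pow hp.le, rpow_natCast_mul_eq_pow hq.le]
  have hrec' (m : ℕ) : l (m + 1) = p ^ ν * l m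
      + q ^ (α * ν₀ + β) * (1 + (-1 : ℝ) ^ m * B) * (q ^ α) ^ m := by
    rw [hrec m, rpow_mul_natCast hq.le]
  exact linearRecurrence_alternating_geometric_closedForm _ _ _ _ _ (sub_ne_zero.mpr hne) (by positivity) l hl0 hrec' n
end

section
/- Let p, q be positive reals and α, β, ν real numbers with p^ν = q^α, and let ν₀, B, λ₀ be real numbers. If the sequence λ : ℕ → ℝ satisfies λ(0) = λ₀ and the recurrence λ(n+1) = p^ν · λ(n) + q^(αν₀ + β) · (1 + (−1)^n · B) · q^(αn) for all n ∈ ℕ, then for all n ∈ ℕ, λ(n) = q^(nα) · λ₀ + q^(αν₀ + β) · q^((n−1)α) · ( n + B · (1 − (−1)^n)/2 ) (with the exponent (n−1)α computed with n as a real number). -/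
open Real

theorem stmt_12 (p q α β ν ν₀ B Λ₀ : ℝ) (hp : 0 < p) (hq : 0 < q)
    (heq : p ^ ν = q ^ α) (l : ℕ → ℝ) (hl0 : l 0 = Λ₀)
    (hrec : ∀ n : ℕ, l (n + 1) = p ^ ν * l n
      + q ^ (α * ν₀ + β) * (1 + (-1 : ℝ) ^ n * B) * q ^ (α * n)) :
    ∀ n : ℕ, l n = q ^ ((n : ℝ) * α) * Λ₀
      + q ^ (α * ν₀ + β) * q ^ (((n : ℝ) - 1) * α)
        * ((n : ℝ) + B * (1 - (-1 : ℝ) ^ n) / 2) := by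
  intro n
  induction n with
  | zero =>
    simp [hl0]
  | succ n ih =>
    rw [hrec, ih, heq]
    push_cast
    have h1 : q ^ (((n : ℝ) + 1) * α) = q ^ ((n : ℝ) * α) * q ^ α := by
      rw [← Real.rpow_add hq]; ring_nf
    have h2 : q ^ (((n : ℝ) + 1 - 1) * α) = q ^ ((n : ℝ) * α) := by ring_nf
    have h3 : q ^ α * q ^ (((n : ℝ) - 1) * α) = q ^ ((n : ℝ) * α) := by
      rw [← Real.rpow_add hq]; ring_nf
    have h4 : q ^ (α * (n : ℝ)) = q ^ ((n : ℝ) * α) := by ring_nf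
    rw [h1, h2, h4]
    rw [← h3]

    ring
end

section
/- Let p, q be positive reals and α, β, ν, ν₀ real numbers with ν·ln p < α·ln q, and let B be a real number with B ≤ (p^ν + q^α)/(p^ν − q^α). Then for every nonpositive integer n ≤ 0 the quantity λ(n) = q^(αν₀ + β) · ( −p^((n−1)ν) · (1 + B) + (p^(nν) − q^(nα))/(p^ν − q^α) + B · (p^(nν) − (−1)^n · q^(nα))/(p^ν + q^α) ) satisfies λ(n) ≥ 0. -/
open Real

private lemma aux_stmt14 (P Q B : ℝ) (hP : 0 < P) (hPQ : P < Q)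
    (hB : B ≤ (P + Q) / (P - Q)) (m : ℕ) :
    0 ≤ -(P ^ (-(m : ℤ) - 1)) * (1 + B)
        + (P ^ (-(m : ℤ)) - Q ^ (-(m : ℤ))) / (P - Q)
        + B * (P ^ (-(m : ℤ)) - (-1 : ℝ) ^ (-(m : ℤ)) * Q ^ (-(m : ℤ))) / (P + Q) := by
  have hQ : 0 < Q := hP.trans hPQ
  have hd : P - Q < 0 := by linarith
  have h1 : B * (Q - P) + (P + Q) ≤ 0 := by
    have h := (le_div_iff_of_neg hd).mp hB
    nlinarith [h]
  have hpow : P ^ (m + 1) ≤ Q ^ (m + 1) := pow_le_pow_left₀ hP.le hPQ.le _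
  have hsign : (-1 : ℝ) ^ m = 1 ∨ (-1 : ℝ) ^ m = -1 := neg_one_pow_eq_or ℝ m
  have h2 : 0 ≤ Q ^ (m + 1) + (-1 : ℝ) ^ m * P ^ (m + 1) := by
    rcases hsign with h | h <;> rw [h] <;> nlinarith [pow_pos hP (m + 1)]
  have h3 : 0 ≤ 1 + (-1 : ℝ) ^ m := by
    rcases hsign with h | h <;> rw [h] <;> norm_num
  have hE : (0 : ℝ) ≤ (P + Q) * P ^ (m + 1) * (1 + (-1 : ℝ) ^ m)
      - (B * (Q - P) + (P + Q)) * (Q ^ (m + 1) + (-1 : ℝ) ^ m * P ^ (m + 1)) := by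
    have t1 : 0 ≤ (P + Q) * P ^ (m + 1) * (1 + (-1 : ℝ) ^ m) :=
      mul_nonneg (mul_nonneg (by positivity) (by positivity)) h3
    nlinarith [mul_nonneg (neg_nonneg.mpr h1) h2]
  have h4 : 0 < Q - P := sub_pos.2 hPQ
  have hden : 0 < P ^ (m + 1) * Q ^ m * (Q - P) * (P + Q) :=
    mul_pos (mul_pos (mul_pos (by positivity) (by positivity)) h4) (by positivity)
  have e1 : P ^ (-(m : ℤ)) = (P ^ m)⁻¹ := by rw [zpow_neg, zpow_natCast]
  have e2 : P ^ (-(m : ℤ) - 1) = (P ^ (m + 1))⁻¹ := by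
    rw [show -(m : ℤ) - 1 = -((m + 1 : ℕ) : ℤ) by push_cast; ring, zpow_neg, zpow_natCast]
  have e3 : Q ^ (-(m : ℤ)) = (Q ^ m)⁻¹ := by rw [zpow_neg, zpow_natCast]
  have e4 : (-1 : ℝ) ^ (-(m : ℤ)) = (-1 : ℝ) ^ m := by
    rw [zpow_neg, zpow_natCast]
    rcases hsign with h | h <;> rw [h] <;> norm_num
  have key : -(P ^ (-(m : ℤ) - 1)) * (1 + B)
        + (P ^ (-(m : ℤ)) - Q ^ (-(m : ℤ))) / (P - Q)
        + B * (P ^ (-(m : ℤ)) - (-1 : ℝ) ^ (-(m : ℤ)) * Q ^ (-(m : ℤ))) / (P + Q)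
      = ((P + Q) * P ^ (m + 1) * (1 + (-1 : ℝ) ^ m)
          - (B * (Q - P) + (P + Q)) * (Q ^ (m + 1) + (-1 : ℝ) ^ m * P ^ (m + 1)))
        / (P ^ (m + 1) * Q ^ m * (Q - P) * (P + Q)) := by
    rw [e1, e2, e3, e4]
    have hPm : (P : ℝ) ^ m ≠ 0 := by positivity
    have hQm : (Q : ℝ) ^ m ≠ 0 := by positivity
    have hne1 : P - Q ≠ 0 := hd.ne
    have hne2 : P + Q ≠ 0 := by positivity
    have hne3 : Q - P ≠ 0 := h4.ne'
    field_simp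
    ring
  rw [key]
  exact div_nonneg hE hden.le

theorem stmt_14 (p q α β ν ν₀ B : ℝ) (hp : 0 < p) (hq : 0 < q)
    (hlt : ν * Real.log p < α * Real.log q)
    (hB : B ≤ (p ^ ν + q ^ α) / (p ^ ν - q ^ α)) :
    ∀ n : ℤ, n ≤ 0 →
      0 ≤ q ^ (α * ν₀ + β) *
        (-(p ^ (((n : ℝ) - 1) * ν)) * (1 + B)
          + (p ^ ((n : ℝ) * ν) - q ^ ((n : ℝ) * α)) / (p ^ ν - q ^ α)
          + B * (p ^ ((n : ℝ) * ν) - (-1 : ℝ) ^ n * q ^ ((n : ℝ) * α))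
              / (p ^ ν + q ^ α)) := by
  intro n hn
  obtain ⟨m, rfl⟩ := Int.exists_eq_neg_ofNat hn
  have conv : ∀ (x r : ℝ), 0 < x → ∀ k : ℤ, x ^ ((k : ℝ) * r) = (x ^ r) ^ k := by
    intro x r hx k
    rw [mul_comm, ← Real.rpow_intCast (x ^ r) k, ← Real.rpow_mul hx.le]
  have hPQ : p ^ ν < q ^ α := by
    rw [Real.rpow_def_of_pos hp, Real.rpow_def_of_pos hq]
    exact Real.exp_lt_exp.mpr (by rw [mul_comm (Real.log p), mul_comm (Real.log q)]; exact hlt)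
  have hP : 0 < p ^ ν := Real.rpow_pos_of_pos hp ν
  have e1 : p ^ ((((-(m : ℤ)) : ℤ) : ℝ) * ν) = (p ^ ν) ^ (-(m : ℤ)) := conv p ν hp _
  have e2 : q ^ ((((-(m : ℤ)) : ℤ) : ℝ) * α) = (q ^ α) ^ (-(m : ℤ)) := conv q α hq _
  have e3 : p ^ (((((-(m : ℤ)) : ℤ) : ℝ) - 1) * ν) = (p ^ ν) ^ (-(m : ℤ) - 1) := by
    rw [show ((((-(m : ℤ)) : ℤ) : ℝ) - 1) = (((-(m : ℤ) - 1 : ℤ)) : ℝ) by push_cast; ring]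
    exact conv p ν hp _
  rw [e1, e2, e3]
  exact mul_nonneg (Real.rpow_pos_of_pos hq _).le (aux_stmt14 _ _ B hP hPQ hB m)
end

section
/- Let p, q be positive reals and α, β, ν, ν₀ real numbers with ν·ln p < α·ln q, and set B = (p^ν + q^α)/(p^ν − q^α). Then the quantity λ(n) = q^(αν₀ + β) · ( −p^((n−1)ν) · (1 + B) + (p^(nν) − q^(nα))/(p^ν − q^α) + B · (p^(nν) − (−1)^n · q^(nα))/(p^ν + q^α) ) satisfies λ(n) = 0 for every odd integer n and λ(n) = 2 q^(α(ν₀ + n) + β)/(q^α − p^ν) for every even integer n. -/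
open Real

theorem stmt_15 (p q α β ν ν₀ B : ℝ) (hp : 0 < p) (hq : 0 < q)
    (hlt : ν * Real.log p < α * Real.log q)
    (hB : B = (p ^ ν + q ^ α) / (p ^ ν - q ^ α)) (l : ℤ → ℝ)
    (hl : ∀ n : ℤ, l n = q ^ (α * ν₀ + β) *
      (-(p ^ (((n : ℝ) - 1) * ν)) * (1 + B)
        + (p ^ ((n : ℝ) * ν) - q ^ ((n : ℝ) * α)) / (p ^ ν - q ^ α)
        + B * (p ^ ((n : ℝ) * ν) - (-1 : ℝ) ^ n * q ^ ((n : ℝ) * α))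
            / (p ^ ν + q ^ α))) :
    (∀ n : ℤ, Odd n → l n = 0) ∧
      (∀ n : ℤ, Even n → l n = 2 * q ^ (α * (ν₀ + (n : ℝ)) + β) / (q ^ α - p ^ ν)) := by
  have hP : (0:ℝ) < p ^ ν := Real.rpow_pos_of_pos hp ν
  have hQ : (0:ℝ) < q ^ α := Real.rpow_pos_of_pos hq α
  have hPQ : p ^ ν < q ^ α := by
    rw [Real.rpow_def_of_pos hp, Real.rpow_def_of_pos hq]
    exact Real.exp_lt_exp.mpr (by linarith)
  have hne : p ^ ν - q ^ α ≠ 0 := by intro h; nlinarith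
  have hne2 : q ^ α - p ^ ν ≠ 0 := by intro h; nlinarith
  have hne' : p ^ ν + q ^ α ≠ 0 := by positivity
  have hPn : ∀ n : ℤ, p ^ ((n:ℝ) * ν) = (p ^ ν) ^ n := by
    intro n
    rw [mul_comm, Real.rpow_mul hp.le, Real.rpow_intCast]
  have hQn : ∀ n : ℤ, q ^ ((n:ℝ) * α) = (q ^ α) ^ n := by
    intro n
    rw [mul_comm, Real.rpow_mul hq.le, Real.rpow_intCast]
  have hPn1 : ∀ n : ℤ, p ^ (((n:ℝ) - 1) * ν) = (p ^ ν) ^ n / p ^ ν := by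
    intro n
    have h1 : ((n:ℝ) - 1) = ((n - 1 : ℤ) : ℝ) := by push_cast; ring
    rw [h1, hPn, zpow_sub_one₀ hP.ne', div_eq_mul_inv]
  constructor
  · intro n hn
    have hneg : (-1:ℝ) ^ n = -1 := Odd.neg_one_zpow hn
    rw [hl, hB, hPn, hQn, hPn1, hneg]
    field_simp
    ring
  · intro n hn
    have hneg : (-1:ℝ) ^ n = 1 := Even.neg_one_zpow hn
    have hR : q ^ (α * (ν₀ + (n:ℝ)) + β) = q ^ (α * ν₀ + β) * (q ^ α) ^ n := by
      rw [← hQn]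
      rw [← Real.rpow_add hq]
      ring_nf
    rw [hl, hB, hPn, hQn, hPn1, hneg, hR]
    field_simp
    ring
end

section
/- Let ρ, β, k, μ, γ be real numbers with μ ≠ 0, let ħw > 0, and set p = e^τ, q = e^ρ with τν = k + μ and ρα = k − μ (so p^(nν) = e^((k+μ)n) and q^(nα) = e^((k−μ)n)). Define f(n) = q^β · ( (p^(nν) − q^(nα))/(p^ν − q^α) + 2γ · (p^(nν) − (−1)^n · q^(nα))/(p^ν + q^α) ) and e(n) = (ħw/2)·(f(n) + f(n+1)). Then for every odd n ∈ ℕ, e(n) = (ħw/2) · e^(ρβ − k) · ( ((1+e^(k+μ))/2)·e^((k+μ)n)/sinh(μ) − ((1+e^(k−μ))/2)·e^((k−μ)n)/sinh(μ) + 2γ·( ((1+e^(k+μ))/2)·e^((k+μ)n)/cosh(μ) + ((1−e^(k−μ))/2)·e^((k−μ)n)/cosh(μ) ) ). -/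
open Real

theorem stmt_16 (ρ β k μ γ hbarw : ℝ) (hμ : μ ≠ 0) (hw : 0 < hbarw)
    (f : ℕ → ℝ)
    (hf : ∀ n : ℕ, f n = Real.exp (ρ * β) *
      ((Real.exp ((k + μ) * n) - Real.exp ((k - μ) * n))
          / (Real.exp (k + μ) - Real.exp (k - μ))
        + 2 * γ * (Real.exp ((k + μ) * n) - (-1 : ℝ) ^ n * Real.exp ((k - μ) * n))
            / (Real.exp (k + μ) + Real.exp (k - μ))))
    (E : ℕ → ℝ) (hE : ∀ n : ℕ, E n = hbarw / 2 * (f n + f (n + 1))) :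
    ∀ n : ℕ, Odd n →
      E n = hbarw / 2 * Real.exp (ρ * β - k) *
        ((1 + Real.exp (k + μ)) / 2 * Real.exp ((k + μ) * n) / Real.sinh μ
          - (1 + Real.exp (k - μ)) / 2 * Real.exp ((k - μ) * n) / Real.sinh μ
          + 2 * γ *
            ((1 + Real.exp (k + μ)) / 2 * Real.exp ((k + μ) * n) / Real.cosh μ
              + (1 - Real.exp (k - μ)) / 2 * Real.exp ((k - μ) * n) / Real.cosh μ)) := by
  intro n hn
  have h1 : ((-1 : ℝ)) ^ n = -1 := hn.neg_one_pow
  have h2 : ((-1 : ℝ)) ^ (n + 1) = 1 := by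
    rw [pow_succ, h1]; ring
  have hsinh : Real.sinh μ ≠ 0 := by
    simpa using (Real.sinh_ne_zero).2 hμ
  have hcosh : Real.cosh μ ≠ 0 := (Real.cosh_pos μ).ne'
  have hep : Real.exp (k + μ) = Real.exp k * Real.exp μ := by rw [Real.exp_add]
  have hem : Real.exp (k - μ) = Real.exp k * Real.exp (-μ) := by
    rw [← Real.exp_add]; ring_nf
  have hdsub : Real.exp (k + μ) - Real.exp (k - μ) = Real.exp k * (2 * Real.sinh μ) := by
    rw [hep, hem, Real.sinh_eq]; ring
  have hdadd : Real.exp (k + μ) + Real.exp (k - μ) = Real.exp k * (2 * Real.cosh μ) := by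
    rw [hep, hem, Real.cosh_eq]; ring
  have hp1 : Real.exp ((k + μ) * (↑(n + 1) : ℝ)) = Real.exp ((k + μ) * n) * Real.exp (k + μ) := by
    rw [← Real.exp_add]; push_cast; ring_nf
  have hm1 : Real.exp ((k - μ) * (↑(n + 1) : ℝ)) = Real.exp ((k - μ) * n) * Real.exp (k - μ) := by
    rw [← Real.exp_add]; push_cast; ring_nf
  have hrb : Real.exp (ρ * β - k) = Real.exp (ρ * β) / Real.exp k := by
    rw [Real.exp_sub]
  have hek : Real.exp k ≠ 0 := Real.exp_ne_zero k
  rw [hE, hf n, hf (n + 1), h1, h2, hp1, hm1, hdsub, hdadd, hrb]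
  field_simp
  ring
end

section
/- Let ρ, β, k, μ, γ be real numbers with μ ≠ 0, let ħw > 0, and set p^(nν) = e^((k+μ)n) and q^(nα) = e^((k−μ)n) (parametrization p = e^τ, q = e^ρ, τν = k + μ, ρα = k − μ). Define f(n) = e^(ρβ) · ( (e^((k+μ)n) − e^((k−μ)n))/(e^(k+μ) − e^(k−μ)) + 2γ · (e^((k+μ)n) − (−1)^n · e^((k−μ)n))/(e^(k+μ) + e^(k−μ)) ) and e(n) = (ħw/2)·(f(n) + f(n+1)). Then for every n ∈ ℕ, e(2n+1) − e(2n) = (ħw/2) · e^(ρβ) · e^((2n−1)k) · ( 1/sinh(μ) + 2γ/cosh(μ) ) · ( e^(2k)·sinh(2(n+1)μ) − sinh(2nμ) ). -/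
/-!
Writing `a = e^(k+μ)`, `b = e^(k-μ)`, the sign `(-1)^n` takes the same value at `2n` and `2n+2`,
so `e(2n+1) - e(2n) = (ħw/2)(f(2n+2) - f(2n))` and both fractions of `f` contribute the same
numerator `(a^(2n+2) - b^(2n+2)) - (a^(2n) - b^(2n))`. The identities
`a^x - b^x = 2 e^(kx) sinh(μx)` and `a ± b = 2 e^k (sinh μ | cosh μ)` turn this into the
stated closed form.
-/

open Real

theorem exp_add_mul_sub_exp_sub_mul (k μ x : ℝ) :
    exp ((k + μ) * x) - exp ((k - μ) * x) = 2 * exp (k * x) * sinh (μ * x) := by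
  rw [sinh_eq, add_mul, sub_mul, exp_add, exp_sub, exp_neg]
  ring

theorem exp_add_add_exp_sub (k μ : ℝ) : exp (k + μ) + exp (k - μ) = 2 * exp k * cosh μ := by
  rw [cosh_eq, exp_add, exp_sub, exp_neg]
  ring

theorem exp_add_mul_sub_exp_sub_mul_add_two_sub (k μ x : ℝ) :
    (exp ((k + μ) * (x + 2)) - exp ((k - μ) * (x + 2)))
      - (exp ((k + μ) * x) - exp ((k - μ) * x))
    = 2 * exp k * exp ((x - 1) * k) * (exp (2 * k) * sinh ((x + 2) * μ) - sinh (x * μ)) := by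
  have hk : exp k * exp ((x - 1) * k) = exp (k * x) := by rw [← exp_add]; ring_nf
  have hk2 : exp (k * x) * exp (2 * k) = exp (k * (x + 2)) := by rw [← exp_add]; ring_nf
  rw [exp_add_mul_sub_exp_sub_mul, exp_add_mul_sub_exp_sub_mul, mul_comm μ, mul_comm μ]
  linear_combination (2 * sinh (x * μ) - 2 * exp (2 * k) * sinh ((x + 2) * μ)) * hk
    - 2 * sinh ((x + 2) * μ) * hk2

noncomputable def structureFn (ρ β k μ γ : ℝ) (n : ℕ) : ℝ :=
  exp (ρ * β) *
      ((exp ((k + μ) * n) - exp ((k - μ) * n)) / (exp (k + μ) - exp (k - μ))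
        + 2 * γ * (exp ((k + μ) * n) - (-1 : ℝ) ^ n * exp ((k - μ) * n))
            / (exp (k + μ) + exp (k - μ)))

theorem structureFn_two_mul_add_two_sub (ρ β k μ γ : ℝ) (n : ℕ) :
    structureFn ρ β k μ γ (2 * n + 2) - structureFn ρ β k μ γ (2 * n) =
      exp (ρ * β) * exp ((2 * n - 1) * k) * (1 / sinh μ + 2 * γ / cosh μ)
        * (exp (2 * k) * sinh (2 * (n + 1) * μ) - sinh (2 * n * μ)) := by
  have hfactor : structureFn ρ β k μ γ (2 * n + 2) - structureFn ρ β k μ γ (2 * n) =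
      exp (ρ * β) * ((exp ((k + μ) * (2 * n + 2)) - exp ((k - μ) * (2 * n + 2)))
        - (exp ((k + μ) * (2 * n)) - exp ((k - μ) * (2 * n))))
        * (1 / (exp (k + μ) - exp (k - μ)) + 2 * γ / (exp (k + μ) + exp (k - μ))) := by
    have heven : Even (2 * n + 2) := ⟨n + 1, by ring⟩
    simp only [structureFn, (even_two_mul n).neg_one_pow, heven.neg_one_pow]
    push_cast
    ring
  have hsub : exp (k + μ) - exp (k - μ) = 2 * exp k * sinh μ := by
    simpa using exp_add_mul_sub_exp_sub_mul k μ 1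
  rw [hfactor, exp_add_mul_sub_exp_sub_mul_add_two_sub, hsub, exp_add_add_exp_sub]
  field_simp

theorem stmt_17_general (ρ β k μ γ hbarw : ℝ)
    (f : ℕ → ℝ)
    (hf : ∀ n : ℕ, f n = Real.exp (ρ * β) *
      ((Real.exp ((k + μ) * n) - Real.exp ((k - μ) * n))
          / (Real.exp (k + μ) - Real.exp (k - μ))
        + 2 * γ * (Real.exp ((k + μ) * n) - (-1 : ℝ) ^ n * Real.exp ((k - μ) * n))
            / (Real.exp (k + μ) + Real.exp (k - μ))))
    (E : ℕ → ℝ) (hE : ∀ n : ℕ, E n = hbarw / 2 * (f n + f (n + 1))) :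
    ∀ n : ℕ, E (2 * n + 1) - E (2 * n) =
      hbarw / 2 * Real.exp (ρ * β) * Real.exp ((2 * (n : ℝ) - 1) * k)
        * (1 / Real.sinh μ + 2 * γ / Real.cosh μ)
        * (Real.exp (2 * k) * Real.sinh (2 * ((n : ℝ) + 1) * μ)
            - Real.sinh (2 * (n : ℝ) * μ)) := by
  intro n
  obtain rfl : f = structureFn ρ β k μ γ := funext hf
  rw [hE, hE]
  linear_combination hbarw / 2 * structureFn_two_mul_add_two_sub ρ β k μ γ n

theorem stmt_17 (ρ β k μ γ hbarw : ℝ) (hμ : μ ≠ 0) (hw : 0 < hbarw)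
    (f : ℕ → ℝ)
    (hf : ∀ n : ℕ, f n = Real.exp (ρ * β) *
      ((Real.exp ((k + μ) * n) - Real.exp ((k - μ) * n))
          / (Real.exp (k + μ) - Real.exp (k - μ))
        + 2 * γ * (Real.exp ((k + μ) * n) - (-1 : ℝ) ^ n * Real.exp ((k - μ) * n))
            / (Real.exp (k + μ) + Real.exp (k - μ))))
    (E : ℕ → ℝ) (hE : ∀ n : ℕ, E n = hbarw / 2 * (f n + f (n + 1))) :
    ∀ n : ℕ, E (2 * n + 1) - E (2 * n) =
      hbarw / 2 * Real.exp (ρ * β) * Real.exp ((2 * (n : ℝ) - 1) * k)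
        * (1 / Real.sinh μ + 2 * γ / Real.cosh μ)
        * (Real.exp (2 * k) * Real.sinh (2 * ((n : ℝ) + 1) * μ)
            - Real.sinh (2 * (n : ℝ) * μ)) :=
  stmt_17_general ρ β k μ γ hbarw f hf E hE
end

section
/- Let ρ, β, k, γ be real numbers and ħw > 0, and consider the degenerate parametrization μ = 0, i.e. p^(nν) = q^(nα) = e^(kn). Define f(n) = ( n + 2γ·(1 − (−1)^n)/2 ) · e^(ρβ) · e^(k(n−1)) and e(n) = (ħw/2)·(f(n) + f(n+1)). Then for every n ∈ ℕ, e(n) = (ħw/2) · e^(ρβ + kn) · ( (n + γ)·(1 + e^(−k)) + γ·(−1)^n·(1 − e^(−k)) + 1 ). -/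
open Real

theorem stmt_18 (ρ β k γ hbarw : ℝ) (hw : 0 < hbarw)
    (f : ℕ → ℝ)
    (hf : ∀ n : ℕ, f n = ((n : ℝ) + 2 * γ * (1 - (-1 : ℝ) ^ n) / 2)
      * Real.exp (ρ * β) * Real.exp (k * ((n : ℝ) - 1)))
    (E : ℕ → ℝ) (hE : ∀ n : ℕ, E n = hbarw / 2 * (f n + f (n + 1))) :
    ∀ n : ℕ, E n = hbarw / 2 * Real.exp (ρ * β + k * n)
      * (((n : ℝ) + γ) * (1 + Real.exp (-k))
          + γ * (-1 : ℝ) ^ n * (1 - Real.exp (-k)) + 1) := by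
  intro n
  rw [hE, hf n, hf (n + 1)]
  push_cast
  have h1 : Real.exp (ρ * β) * Real.exp (k * ((n : ℝ) - 1))
      = Real.exp (ρ * β + k * n) * Real.exp (-k) := by
    rw [← Real.exp_add, ← Real.exp_add]; ring_nf
  have h2 : Real.exp (ρ * β) * Real.exp (k * ((n : ℝ) + 1 - 1))
      = Real.exp (ρ * β + k * n) := by
    rw [← Real.exp_add]; ring_nf
  have h3 : (-1 : ℝ) ^ (n + 1) = -(-1 : ℝ) ^ n := by ring
  rw [h3]
  linear_combination (hbarw / 2 * ((n : ℝ) + 2 * γ * (1 - (-1 : ℝ) ^ n) / 2)) * h1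
    + (hbarw / 2 * ((n : ℝ) + 1 + 2 * γ * (1 + (-1 : ℝ) ^ n) / 2)) * h2
end
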